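/- arXiv:2503.15179 — 4 statements merged into one kernel-verified Lean document; each statement's English description precedes it below -/
import Mathlib

section
/- Let G be a directed graph with finitely many vertices and no cycles (i.e., there is no nonempty directed path from any vertex to itself). Then the geometric realization of the nerve of the poset C(G) of proper labellings of G is a contractible topological space. -/
open CategoryTheory

/-- The three labels `A`, `B`, `C`. -/
inductive Label : Type
  | A | B | C
  deriving DecidableEq

/-- A labelling `ℓ` of the directed graph with vertex set `V` and edge relation `E`
is proper if for every edge `(v, w)`, either `ℓ v = A` or `ℓ w = B`. -/
def IsProper {V : Type} (E : V → V → Prop) (ℓ : V → Label) : Prop :=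
  ∀ v w, E v w → ℓ v = Label.A ∨ ℓ w = Label.B

/-- The proper labellings of the directed graph `(V, E)`. -/
def ProperLabelling (V : Type) (E : V → V → Prop) : Type :=
  { ℓ : V → Label // IsProper E ℓ }

/-- The poset `C(G)` of proper labellings: `ℓ ≤ ℓ'` iff at every vertex the labels agree,
or the label changes from `A` or `B` to `C`. -/
instance (V : Type) (E : V → V → Prop) : PartialOrder (ProperLabelling V E) where
  le ℓ ℓ' := ∀ v, ℓ.1 v = ℓ'.1 v ∨ (ℓ.1 v ≠ Label.C ∧ ℓ'.1 v = Label.C)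
  le_refl ℓ v := Or.inl rfl
  le_trans a b c hab hbc v := by
    rcases hab v with h | ⟨h1, h2⟩
    · rcases hbc v with h' | ⟨h1', h2'⟩
      · exact Or.inl (h.trans h')
      · exact Or.inr ⟨by rw [h]; exact h1', h2'⟩
    · rcases hbc v with h' | ⟨h1', h2'⟩
      · exact Or.inr ⟨h1, h'.symm.trans h2⟩
      · exact Or.inr ⟨h1, h2'⟩
  le_antisymm a b hab hba := by
    apply Subtype.ext
    funext v
    rcases hab v with h | ⟨h1, h2⟩
    · exact h
    · rcases hba v with h' | ⟨h1', h2'⟩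
      · exact h'.symm
      · exact absurd h2' h1

/-!
Monotone maps `f ≤ g` of a finite poset induce homotopic maps of `|nerve P|`. If the set where
`f` and `g` differ is an antichain, it meets a chain `c 0 ≤ ⋯ ≤ c n` in a single value, taken
on an interval of indices ending at some `q`; then `f (c 0) ≤ ⋯ ≤ f (c q) ≤ g (c q) ≤ ⋯ ≤ g (c n)`
is a simplex having both `f ∘ c` and `g ∘ c` as (possibly degenerate) faces, and the straight
segment between them inside it is compatible with all simplicial operators. A general pair
`f ≤ g` is joined by changing `f` into `g` one rank level at a time.

For an acyclic graph, fix a rank `r` decreasing along edges. Relabelling by `B` every vertex of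
rank `< k` gives a monotone self-map `T k` of `C(G)`, and `T k`, `T (k + 1)` both lie below the map
that moreover turns the `A`'s of rank `k` into `C`'s. So `id = T 0` is homotopic to `T N`, the
constant map at the all-`B` labelling.
-/

open Simplicial Opposite unitInterval

universe u

namespace stdSimplex

variable {ι κ : Type*} [Fintype ι] [Fintype κ]

noncomputable def lineMap (a b : stdSimplex ℝ ι) (t : I) : stdSimplex ℝ ι :=
  ⟨AffineMap.lineMap a.1 b.1 (t : ℝ), (convex_stdSimplex ℝ ι).lineMap_mem a.2 b.2 t.2⟩

@[simp] lemma lineMap_zero (a b : stdSimplex ℝ ι) : lineMap a b 0 = a := by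
  ext
  simp [lineMap]

@[simp] lemma lineMap_one (a b : stdSimplex ℝ ι) : lineMap a b 1 = b := by
  ext
  simp [lineMap]

lemma map_lineMap (f : ι → κ) (a b : stdSimplex ℝ ι) (t : I) :
    map f (lineMap a b t) = lineMap (map f a) (map f b) t :=
  Subtype.ext ((FunOnFinite.linearMap ℝ ℝ f).toAffineMap.apply_lineMap a.1 b.1 (t : ℝ))

lemma _root_.Continuous.stdSimplexLineMap {α : Type*} [TopologicalSpace α]
    {a b : α → stdSimplex ℝ ι} {t : α → I} (ha : Continuous a) (hb : Continuous b)
    (ht : Continuous t) : Continuous fun x => lineMap (a x) (b x) (t x) :=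
  (AffineMap.lineMap_continuous_uncurry.comp ((continuous_subtype_val.comp ha).prodMk
    ((continuous_subtype_val.comp hb).prodMk (continuous_subtype_val.comp ht)))).subtype_mk _

end stdSimplex

namespace Fin

variable {α : Type*} {n : ℕ}

/-- The tuple `(a 0, …, a q, b q, …, b n)`. -/
def prism (q : Fin (n + 1)) (a b : Fin (n + 1) → α) (k : Fin (n + 2)) : α :=
  (if k ≤ q.castSucc then a else b) (q.predAbove k)

lemma apply_prism {β : Type*} (h : α → β) (q : Fin (n + 1)) (a b : Fin (n + 1) → α)
    (k : Fin (n + 2)) : h (prism q a b k) = prism q (h ∘ a) (h ∘ b) k := by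
  unfold prism
  split_ifs <;> rfl

lemma prism_succAbove (q : Fin (n + 1)) (a b : Fin (n + 1) → α) (i : Fin (n + 1)) :
    prism q a b (q.succ.succAbove i) = if i ≤ q then a i else b i := by
  rcases le_or_gt i q with h | h
  · rw [succAbove_of_castSucc_lt _ _ (castSucc_lt_succ_iff.2 h), prism,
      if_pos (castSucc_le_castSucc_iff.2 h), predAbove_castSucc_of_le _ _ h, if_pos h]
  · rw [succAbove_of_le_castSucc _ _ (succ_le_castSucc_iff.2 h), prism,
      if_neg (succ_le_castSucc_iff.not.2 h.asymm), predAbove_succ_of_le _ _ h.le,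
      if_neg h.not_ge]

@[simp] lemma prism_succ (q : Fin (n + 1)) (a b : Fin (n + 1) → α) :
    prism q a b q.succ = b q := by
  rw [prism, if_neg (by simp [Fin.le_def]), predAbove_succ_self]

lemma prism_monotone [Preorder α] (q : Fin (n + 1)) {a b : Fin (n + 1) → α}
    (ha : Monotone a) (hb : Monotone b) (hab : ∀ i, a i ≤ b i) : Monotone (prism q a b) := by
  intro k l hkl
  have hp := predAbove_right_monotone q hkl
  unfold prism
  split_ifs with hk hl hl
  · exact ha hp
  · exact (ha hp).trans (hab _)
  · exact absurd (hkl.trans hl) hk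
  · exact hb hp

end Fin

namespace SSet

variable {X : SSet.{u}}

noncomputable def simplexMap {n : ℕ} (x : X _⦋n⦌) :
    C(_root_.stdSimplex ℝ (Fin (n + 1)), |X|) :=
  TopCat.toSSetObjEquiv _ _ ((sSetTopAdj.unit.app X).app _ x)

lemma simplexMap_map {m n : ℕ} (θ : ⦋m⦌ ⟶ ⦋n⦌) (x : X _⦋n⦌)
    (z : _root_.stdSimplex ℝ (Fin (m + 1))) :
    simplexMap (X.map θ.op x) z = simplexMap x (stdSimplex.map θ z) := by
  have h := ConcreteCategory.congr_hom ((sSetTopAdj.unit.app X).naturality θ.op) x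
  exact congrArg (fun s => TopCat.toSSetObjEquiv _ _ s z) h

lemma apply_simplexMap {Y : TopCat.{u}} (g : |X| ⟶ Y) {n : ℕ} (x : X _⦋n⦌)
    (z : _root_.stdSimplex ℝ (Fin (n + 1))) :
    g (simplexMap x z) = TopCat.toSSetObjEquiv _ _ ((sSetTopAdj.homEquiv _ _ g).app _ x) z := by
  rw [Adjunction.homEquiv_unit]
  rfl

lemma toTop_map_simplexMap {Y : SSet.{u}} (φ : X ⟶ Y) {n : ℕ} (x : X _⦋n⦌)
    (z : _root_.stdSimplex ℝ (Fin (n + 1))) :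
    SSet.toTop.map φ (simplexMap x z) = simplexMap (φ.app _ x) z := by
  rw [apply_simplexMap, Adjunction.homEquiv_unit, sSetTopAdj.unit_naturality]
  rfl

lemma toTop_hom_ext {Y : TopCat.{u}} {g₁ g₂ : |X| ⟶ Y}
    (h : ∀ (n : ℕ) (x : X _⦋n⦌) z, g₁ (simplexMap x z) = g₂ (simplexMap x z)) : g₁ = g₂ := by
  apply (sSetTopAdj.homEquiv _ _).injective
  refine SSet.hom_ext fun Δ => ConcreteCategory.hom_ext _ _ fun x => ?_
  apply (TopCat.toSSetObjEquiv _ _).injective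
  ext z
  simpa only [apply_simplexMap] using h Δ.unop.len x z

/-- The homotopy is the adjoint of a simplicial map `X ⟶ Sing C(I, Y)`; this avoids comparing
`|X ⊗ Δ[1]|` with `|X| × I`. -/
theorem homotopic_of_simplexwise {Y : TopCat.{u}} (g₀ g₁ : |X| ⟶ Y)
    (H : ∀ {n : ℕ}, X _⦋n⦌ → C(_root_.stdSimplex ℝ (Fin (n + 1)) × I, Y))
    (hH : ∀ {m n : ℕ} (θ : ⦋m⦌ ⟶ ⦋n⦌) (x : X _⦋n⦌) z t,
      H (X.map θ.op x) (z, t) = H x (stdSimplex.map θ z, t))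
    (h₀ : ∀ {n : ℕ} (x : X _⦋n⦌) z, H x (z, 0) = g₀ (simplexMap x z))
    (h₁ : ∀ {n : ℕ} (x : X _⦋n⦌) z, H x (z, 1) = g₁ (simplexMap x z)) :
    ContinuousMap.Homotopic g₀.hom g₁.hom := by
  let H' : X ⟶ TopCat.toSSet.obj (TopCat.of C(I, Y)) :=
    { app Δ := TypeCat.ofHom fun x => (TopCat.toSSetObjEquiv _ _).symm (H x).curry
      naturality Δ Δ' θ := by
        refine ConcreteCategory.hom_ext _ _ fun x => ?_
        apply (TopCat.toSSetObjEquiv _ _).injective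
        ext z t
        exact hH θ.unop x z t }
  let κ := (sSetTopAdj.homEquiv _ _).symm H'
  have hκ (t : I) (g : |X| ⟶ Y)
      (hg : ∀ {n : ℕ} (x : X _⦋n⦌) z, H x (z, t) = g (simplexMap x z)) (p : |X|) :
      κ p t = g p := by
    have : κ ≫ TopCat.ofHom ⟨fun γ : C(I, Y) => γ t, continuous_eval_const t⟩ = g :=
      toTop_hom_ext fun n x z => by
        rw [TopCat.comp_app, apply_simplexMap, ← hg]
        simp [κ, H']
    exact ConcreteCategory.congr_hom this p
  exact ⟨{ toFun p := κ p.2 p.1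
           map_zero_left := hκ 0 g₀ h₀
           map_one_left := hκ 1 g₁ h₁ }⟩

end SSet

section PrismChain

variable {P : Type*} [Preorder P] (f g : P →o P) {m n : ℕ}

/-- `sSup ∅ = 0` when `f` and `g` agree along `c`; any value would do then. -/
noncomputable def lastMoved (c : Fin (n + 1) → P) : Fin (n + 1) :=
  sSup {i | f (c i) ≠ g (c i)}

noncomputable def prismChain (c : Fin (n + 1) → P) : Fin (n + 2) → P :=
  Fin.prism (lastMoved f g c) (f ∘ c) (g ∘ c)

open Classical in
/-- Under the antichain hypothesis, all indices where `f` and `g` differ along `c` carry the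
value `c q` with `q = lastMoved f g c`, so they can all be sent to the vertex `g (c q)` of the
prism. -/
noncomputable def pushMoved (c : Fin (n + 1) → P) (i : Fin (n + 1)) : Fin (n + 2) :=
  if f (c i) = g (c i) then (lastMoved f g c).succ.succAbove i else (lastMoved f g c).succ

noncomputable def prismMap (c : Fin (n + 1) → P) (φ : Fin (m + 1) → Fin (n + 1)) :
    Fin (m + 2) → Fin (n + 2) :=
  Fin.prism (lastMoved f g (c ∘ φ)) ((lastMoved f g c).succ.succAbove ∘ φ) (pushMoved f g c ∘ φ)

variable {f g} {c : Fin (n + 1) → P}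

lemma le_lastMoved {i : Fin (n + 1)} (hi : f (c i) ≠ g (c i)) : i ≤ lastMoved f g c :=
  le_sSup hi

lemma lastMoved_moved {i : Fin (n + 1)} (hi : f (c i) ≠ g (c i)) :
    f (c (lastMoved f g c)) ≠ g (c (lastMoved f g c)) :=
  Set.Nonempty.csSup_mem (s := {i | f (c i) ≠ g (c i)}) ⟨i, hi⟩ (Set.toFinite _)

lemma prismChain_monotone (hfg : f ≤ g) (hc : Monotone c) : Monotone (prismChain f g c) :=
  Fin.prism_monotone _ (f.monotone.comp hc) (g.monotone.comp hc) fun i => hfg (c i)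

lemma prismChain_succAbove (i : Fin (n + 1)) :
    prismChain f g c ((lastMoved f g c).succ.succAbove i) = f (c i) := by
  rw [prismChain, Fin.prism_succAbove]
  split_ifs with hi
  · rfl
  · by_contra hne
    exact hi (le_lastMoved (Ne.symm hne))

lemma succAbove_le_pushMoved (i : Fin (n + 1)) :
    (lastMoved f g c).succ.succAbove i ≤ pushMoved f g c i := by
  unfold pushMoved
  split_ifs with hi
  · rfl
  · have hiq := Fin.castSucc_lt_succ_iff.2 (le_lastMoved hi)
    exact (Fin.succAbove_of_castSucc_lt _ _ hiq).trans_le hiq.le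

variable (φ : Fin (m + 1) → Fin (n + 1))

lemma prismMap_succAbove (i : Fin (m + 1)) :
    prismMap f g c φ ((lastMoved f g (c ∘ φ)).succ.succAbove i) =
      (lastMoved f g c).succ.succAbove (φ i) := by
  rw [prismMap, Fin.prism_succAbove]
  split_ifs with hi
  · rfl
  · have hφi : f (c (φ i)) = g (c (φ i)) := by
      by_contra hne
      exact hi (le_lastMoved hne)
    simp [pushMoved, hφi]

lemma prismMap_pushMoved (i : Fin (m + 1)) :
    prismMap f g c φ (pushMoved f g (c ∘ φ) i) = pushMoved f g c (φ i) := by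
  by_cases hi : f (c (φ i)) = g (c (φ i))
  · simp only [pushMoved, Function.comp_apply, hi, if_true, prismMap_succAbove]
  · have hq : f (c (φ (lastMoved f g (c ∘ φ)))) ≠ g (c (φ (lastMoved f g (c ∘ φ)))) :=
      lastMoved_moved (c := c ∘ φ) hi
    simp only [pushMoved, Function.comp_apply, hi, hq, if_false, prismMap, Fin.prism_succ]

end PrismChain

section Antichain

variable {P : Type*} [PartialOrder P] {f g : P →o P} {m n : ℕ} {c : Fin (n + 1) → P}
  (hanti : IsAntichain (· ≤ ·) {x | f x ≠ g x}) (hc : Monotone c)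
include hanti hc

lemma eq_lastMoved_of_moved {i : Fin (n + 1)} (hi : f (c i) ≠ g (c i)) :
    c i = c (lastMoved f g c) :=
  hanti.eq hi (lastMoved_moved hi) (hc (le_lastMoved hi))

lemma pushMoved_monotone : Monotone (pushMoved f g c) := by
  intro i j hij
  unfold pushMoved
  split_ifs with hi hj hj
  · exact (Fin.strictMono_succAbove _).monotone hij
  · have hiq := hij.trans (le_lastMoved hj)
    rw [Fin.succAbove_of_castSucc_lt _ _ (Fin.castSucc_lt_succ_iff.2 hiq)]
    exact (Fin.castSucc_lt_succ_iff.2 hiq).le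
  · have hqj : lastMoved f g c < j := by
      by_contra! hjq
      have hcj : c j = c i :=
        le_antisymm (eq_lastMoved_of_moved hanti hc hi ▸ hc hjq) (hc hij)
      exact hi (hcj ▸ hj)
    rw [Fin.succAbove_of_le_castSucc _ _ (Fin.succ_le_castSucc_iff.2 hqj)]
    exact Fin.succ_le_succ_iff.2 hqj.le
  · rfl

lemma prismChain_pushMoved (i : Fin (n + 1)) :
    prismChain f g c (pushMoved f g c i) = g (c i) := by
  unfold pushMoved
  split_ifs with hi
  · rw [prismChain_succAbove, hi]
  · rw [prismChain, Fin.prism_succ, Function.comp_apply, ← eq_lastMoved_of_moved hanti hc hi]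

lemma prismMap_monotone {φ : Fin (m + 1) → Fin (n + 1)} (hφ : Monotone φ) :
    Monotone (prismMap f g c φ) :=
  Fin.prism_monotone _ ((Fin.strictMono_succAbove _).monotone.comp hφ)
    ((pushMoved_monotone hanti hc).comp hφ) fun _ => succAbove_le_pushMoved _

lemma prismChain_prismMap (φ : Fin (m + 1) → Fin (n + 1)) (k : Fin (m + 2)) :
    prismChain f g c (prismMap f g c φ k) = prismChain f g (c ∘ φ) k := by
  rw [prismMap, Fin.apply_prism (prismChain f g c), prismChain]
  congr 1 <;> funext i
  · exact prismChain_succAbove (φ i)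
  · exact prismChain_pushMoved hanti hc (φ i)

end Antichain

section PrismHomotopy

open SSet

variable {P : Type u} [PartialOrder P] {f g : P →o P}

lemma nerve_ext {n : ℕ} {x y : (nerve P) _⦋n⦌} (h : ∀ i, x.obj i = y.obj i) : x = y :=
  CategoryTheory.Functor.ext h fun _ _ _ => Subsingleton.elim _ _

noncomputable def prismSimplex (hfg : f ≤ g) {n : ℕ} (x : (nerve P) _⦋n⦌) :
    (nerve P) _⦋n + 1⦌ :=
  (prismChain_monotone hfg x.monotone).functor

variable (hfg : f ≤ g) (hanti : IsAntichain (· ≤ ·) {x | f x ≠ g x})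

noncomputable def prismHomotopy {n : ℕ} (x : (nerve P) _⦋n⦌) :
    C(_root_.stdSimplex ℝ (Fin (n + 1)) × I, |nerve P|) where
  toFun p := simplexMap (prismSimplex hfg x) (stdSimplex.lineMap
    (stdSimplex.map (lastMoved f g x.obj).succ.succAbove p.1)
    (stdSimplex.map (pushMoved f g x.obj) p.1) p.2)
  continuous_toFun := (simplexMap _).continuous.comp <|
    ((stdSimplex.continuous_map _).comp continuous_fst).stdSimplexLineMap
      ((stdSimplex.continuous_map _).comp continuous_fst) continuous_snd

lemma prismHomotopy_zero {n : ℕ} (x : (nerve P) _⦋n⦌) z :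
    prismHomotopy hfg x (z, 0) = SSet.toTop.map (nerveMap f.toFunctor) (simplexMap x z) := by
  have hface : (nerve P).map (SimplexCategory.δ (lastMoved f g x.obj).succ).op
      (prismSimplex hfg x) = (nerveMap f.toFunctor).app _ x :=
    nerve_ext fun i => prismChain_succAbove i
  rw [toTop_map_simplexMap, ← hface, simplexMap_map]
  exact congrArg (simplexMap _) (stdSimplex.lineMap_zero _ _)

include hfg hanti

lemma prismHomotopy_one {n : ℕ} (x : (nerve P) _⦋n⦌) z :
    prismHomotopy hfg x (z, 1) = SSet.toTop.map (nerveMap g.toFunctor) (simplexMap x z) := by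
  have hface : (nerve P).map (SimplexCategory.mkHom ⟨pushMoved f g x.obj,
      pushMoved_monotone hanti x.monotone⟩).op (prismSimplex hfg x) =
      (nerveMap g.toFunctor).app _ x :=
    nerve_ext fun i => prismChain_pushMoved hanti x.monotone i
  rw [toTop_map_simplexMap, ← hface, simplexMap_map]
  exact congrArg (simplexMap _) (stdSimplex.lineMap_one _ _)

lemma prismHomotopy_map {m n : ℕ} (θ : ⦋m⦌ ⟶ ⦋n⦌) (x : (nerve P) _⦋n⦌) z t :
    prismHomotopy hfg ((nerve P).map θ.op x) (z, t) =
      prismHomotopy hfg x (stdSimplex.map θ z, t) := by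
  let Ψ : ⦋m + 1⦌ ⟶ ⦋n + 1⦌ := SimplexCategory.mkHom
    ⟨prismMap f g x.obj θ, prismMap_monotone hanti x.monotone θ.toOrderHom.monotone⟩
  have hprism : (nerve P).map Ψ.op (prismSimplex hfg x) =
      prismSimplex hfg ((nerve P).map θ.op x) :=
    nerve_ext fun k => prismChain_prismMap hanti x.monotone θ k
  have hδ : Ψ ∘ (lastMoved f g ((nerve P).map θ.op x).obj).succ.succAbove =
      (lastMoved f g x.obj).succ.succAbove ∘ θ :=
    funext (prismMap_succAbove θ)
  have hpush : Ψ ∘ pushMoved f g ((nerve P).map θ.op x).obj = pushMoved f g x.obj ∘ θ :=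
    funext (prismMap_pushMoved θ)
  simp only [prismHomotopy, ContinuousMap.coe_mk]
  rw [← hprism, simplexMap_map, stdSimplex.map_lineMap]
  simp only [stdSimplex.map_comp_apply, hδ, hpush]

theorem homotopic_toTop_nerveMap_of_le_of_isAntichain :
    ContinuousMap.Homotopic (SSet.toTop.map (nerveMap f.toFunctor)).hom
      (SSet.toTop.map (nerveMap g.toFunctor)).hom :=
  homotopic_of_simplexwise _ _ (prismHomotopy hfg) (prismHomotopy_map hfg hanti)
    (prismHomotopy_zero hfg) (prismHomotopy_one hfg hanti)

end PrismHomotopy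

lemma ncard_lt_ncard_of_rel {α : Type*} [Finite α] {R : α → α → Prop}
    (htrans : ∀ a b c, R a b → R b c → R a c) (hirrefl : ∀ a, ¬ R a a) {a b : α}
    (hab : R a b) : {x | R x a}.ncard < {x | R x b}.ncard :=
  Set.ncard_lt_ncard ⟨fun _ hx => htrans _ _ _ hx hab, fun h => hirrefl a (h hab)⟩
    (Set.toFinite _)

lemma exists_strictMono_nat (P : Type*) [PartialOrder P] [Finite P] :
    ∃ r : P → ℕ, StrictMono r :=
  ⟨fun x => {y | y < x}.ncard,
    fun _ _ => ncard_lt_ncard_of_rel (R := (· < ·)) (fun _ _ _ => lt_trans) lt_irrefl⟩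

namespace OrderHom

variable {P : Type*} [PartialOrder P] {f g : P →o P} {r : P → ℕ}

def switchAt (hr : StrictMono r) (hfg : f ≤ g) (k : ℕ) : P →o P where
  toFun x := if k ≤ r x then g x else f x
  monotone' x y hxy := by
    rcases hxy.eq_or_lt with rfl | hlt
    · rfl
    have hrxy := hr hlt
    dsimp only
    split_ifs
    · exact g.monotone hxy
    · omega
    · exact (f.monotone hxy).trans (hfg y)
    · exact f.monotone hxy

variable (hr : StrictMono r) (hfg : f ≤ g)

lemma switchAt_apply (k : ℕ) (x : P) : switchAt hr hfg k x = if k ≤ r x then g x else f x :=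
  rfl

lemma switchAt_zero : switchAt hr hfg 0 = g := by
  ext x
  simp [switchAt_apply]

lemma switchAt_of_forall_lt {N : ℕ} (hN : ∀ x, r x < N) : switchAt hr hfg N = f := by
  ext x
  simp [switchAt_apply, (hN x).not_ge]

lemma switchAt_succ_le (k : ℕ) : switchAt hr hfg (k + 1) ≤ switchAt hr hfg k := by
  intro x
  rw [switchAt_apply, switchAt_apply]
  split_ifs
  · rfl
  · omega
  · exact hfg x
  · rfl

lemma isAntichain_switchAt_succ_ne (k : ℕ) :
    IsAntichain (· ≤ ·) {x | switchAt hr hfg (k + 1) x ≠ switchAt hr hfg k x} := by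
  have hsub : {x | switchAt hr hfg (k + 1) x ≠ switchAt hr hfg k x} ⊆ {x | r x = k} := by
    intro x hx
    show r x = k
    by_contra hne
    apply hx
    rw [switchAt_apply, switchAt_apply]
    split_ifs <;> first | rfl | omega
  refine IsAntichain.subset (fun x hx y hy hne hxy => ?_) hsub
  exact (hr (hxy.lt_of_ne hne)).ne (hx.trans hy.symm)

end OrderHom

theorem homotopic_toTop_nerveMap_of_le {P : Type u} [PartialOrder P] [Finite P] {f g : P →o P}
    (hfg : f ≤ g) :
    ContinuousMap.Homotopic (SSet.toTop.map (nerveMap f.toFunctor)).hom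
      (SSet.toTop.map (nerveMap g.toFunctor)).hom := by
  obtain ⟨r, hr⟩ := exists_strictMono_nat P
  obtain ⟨N, hN⟩ := (Set.finite_range r).bddAbove
  have hk (k : ℕ) : ContinuousMap.Homotopic
      (SSet.toTop.map (nerveMap (OrderHom.switchAt hr hfg k).toFunctor)).hom
      (SSet.toTop.map (nerveMap g.toFunctor)).hom := by
    induction k with
    | zero => rw [OrderHom.switchAt_zero]
    | succ k ih =>
      exact (homotopic_toTop_nerveMap_of_le_of_isAntichain (OrderHom.switchAt_succ_le hr hfg k)
        (OrderHom.isAntichain_switchAt_succ_ne hr hfg k)).trans ih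
  simpa only [OrderHom.switchAt_of_forall_lt hr hfg (N := N + 1)
    fun x => Nat.lt_succ_of_le (hN ⟨x, rfl⟩)] using hk (N + 1)

open SSet in
lemma toTop_map_nerveMap_const {P : Type u} [PartialOrder P] (b : P) (x : (nerve P) _⦋0⦌)
    (hx : x.obj 0 = b) :
    (SSet.toTop.map (nerveMap (OrderHom.const P b).toFunctor)).hom =
      ContinuousMap.const _ (simplexMap x default) := by
  let F : P →o ULift.{u} (Fin 1) := OrderHom.const P (ULift.up 0)
  let G : ULift.{u} (Fin 1) →o P := OrderHom.const _ b
  have hfac : nerveMap (OrderHom.const P b).toFunctor =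
      nerveMap F.toFunctor ≫ nerveMap G.toFunctor :=
    rfl
  have : Subsingleton |nerve (ULift.{u} (Fin 1))| :=
    (TopCat.homeoOfIso (SSet.toTop.mapIso (SSet.stdSimplex.isoNerve 0))).symm.injective.subsingleton
  have hb : SSet.toTop.map (nerveMap (OrderHom.const P b).toFunctor) (simplexMap x default) =
      simplexMap x default := by
    have hx' : (nerveMap (OrderHom.const P b).toFunctor).app (op ⦋0⦌) x = x :=
      nerve_ext fun i => by
        obtain rfl := Fin.fin_one_eq_zero i
        exact hx.symm
    rw [toTop_map_simplexMap, hx']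
  ext p
  rw [ContinuousMap.const_apply, ← hb]
  simp only [hfac, Functor.map_comp, TopCat.hom_comp, ContinuousMap.comp_apply]
  exact congrArg _ (Subsingleton.elim _ _)

theorem contractibleSpace_toTop_nerve_of_homotopic_const {P : Type u} [PartialOrder P] (b : P)
    (h : ContinuousMap.Homotopic (SSet.toTop.map (nerveMap (OrderHom.id : P →o P).toFunctor)).hom
      (SSet.toTop.map (nerveMap (OrderHom.const P b).toFunctor)).hom) :
    ContractibleSpace |nerve P| := by
  have hid : nerveMap (OrderHom.id : P →o P).toFunctor = 𝟙 _ := rfl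
  rw [hid, CategoryTheory.Functor.map_id,
    toTop_map_nerveMap_const b (ComposableArrows.mk₀ b) rfl] at h
  exact (contractible_iff_id_nullhomotopic _).2 ⟨_, h⟩

instance : Fintype Label :=
  ⟨{.A, .B, .C}, fun l => by cases l <;> simp⟩

instance {V : Type} [Finite V] (E : V → V → Prop) : Finite (ProperLabelling V E) :=
  inferInstanceAs (Finite {ℓ : V → Label // IsProper E ℓ})

namespace ProperLabelling

variable {V : Type} {E : V → V → Prop}

@[ext] lemma ext {ℓ ℓ' : ProperLabelling V E} (h : ∀ v, ℓ.1 v = ℓ'.1 v) : ℓ = ℓ' :=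
  Subtype.ext (funext h)

def allB : ProperLabelling V E :=
  ⟨fun _ => .B, fun _ _ _ => Or.inr rfl⟩

variable {r : V → ℕ} (hr : ∀ v w, E v w → r w < r v)

def relabelB (k : ℕ) : ProperLabelling V E →o ProperLabelling V E where
  toFun ℓ := ⟨fun v => if r v < k then .B else ℓ.1 v, fun v w hvw => by
    have := hr v w hvw
    have := ℓ.2 v w hvw
    dsimp only
    split_ifs <;> first | omega | simp_all⟩
  monotone' a b hab v := by
    dsimp only
    split_ifs
    · exact Or.inl rfl
    · exact hab v

def relabelBC (k : ℕ) : ProperLabelling V E →o ProperLabelling V E where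
  toFun ℓ := ⟨fun v => if r v < k then .B else if r v = k ∧ ℓ.1 v = .A then .C else ℓ.1 v,
    fun v w hvw => by
      have := hr v w hvw
      have := ℓ.2 v w hvw
      dsimp only
      split_ifs <;> first | omega | simp_all⟩
  monotone' a b hab v := by
    dsimp only
    rcases hab v with h | ⟨h1, h2⟩ <;> split_ifs <;> simp_all

lemma relabelB_apply (k : ℕ) (ℓ : ProperLabelling V E) (v : V) :
    (relabelB hr k ℓ).1 v = if r v < k then .B else ℓ.1 v :=
  rfl

lemma relabelBC_apply (k : ℕ) (ℓ : ProperLabelling V E) (v : V) :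
    (relabelBC hr k ℓ).1 v =
      if r v < k then .B else if r v = k ∧ ℓ.1 v = .A then .C else ℓ.1 v :=
  rfl

lemma relabelB_le_relabelBC (k : ℕ) : relabelB hr k ≤ relabelBC hr k := fun ℓ v => by
  rw [relabelB_apply, relabelBC_apply]
  split_ifs <;> simp_all

lemma relabelB_succ_le_relabelBC (k : ℕ) : relabelB hr (k + 1) ≤ relabelBC hr k := fun ℓ v => by
  rw [relabelB_apply, relabelBC_apply]
  rcases lt_trichotomy (r v) k with h | rfl | h
  · simp [h, Nat.lt_succ_of_lt h]
  · rcases ℓ.1 v <;> simp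
  · simp [h.ne', h.not_gt, show ¬ r v < k + 1 by omega]

lemma relabelB_zero : relabelB hr 0 = OrderHom.id := by
  ext ℓ v
  simp [relabelB_apply]

lemma relabelB_of_forall_lt {N : ℕ} (hN : ∀ v, r v < N) :
    relabelB hr N = OrderHom.const _ (allB : ProperLabelling V E) := by
  ext ℓ v
  exact if_pos (hN v)

lemma homotopic_id_relabelB [Finite V] (k : ℕ) :
    ContinuousMap.Homotopic
      (SSet.toTop.map (nerveMap (OrderHom.id : ProperLabelling V E →o _).toFunctor)).hom
      (SSet.toTop.map (nerveMap (relabelB hr k).toFunctor)).hom := by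
  induction k with
  | zero => rw [relabelB_zero]
  | succ k ih =>
    exact ih.trans ((homotopic_toTop_nerveMap_of_le (relabelB_le_relabelBC hr k)).trans
      (homotopic_toTop_nerveMap_of_le (relabelB_succ_le_relabelBC hr k)).symm)

include hr in
theorem contractibleSpace_toTop_nerve_of_rank [Finite V] :
    ContractibleSpace |nerve (ProperLabelling V E)| := by
  obtain ⟨N, hN⟩ := (Set.finite_range r).bddAbove
  have h := homotopic_id_relabelB hr (N + 1)
  rw [relabelB_of_forall_lt hr fun v => Nat.lt_succ_of_le (hN ⟨v, rfl⟩)] at h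
  exact contractibleSpace_toTop_nerve_of_homotopic_const allB h

end ProperLabelling

lemma exists_rank_lt_of_acyclic {V : Type*} [Finite V] {E : V → V → Prop}
    (hacyc : ∀ v, ¬ Relation.TransGen E v v) : ∃ r : V → ℕ, ∀ v w, E v w → r w < r v :=
  ⟨fun v => {w | Relation.TransGen E v w}.ncard, fun _ _ hvw =>
    ncard_lt_ncard_of_rel (R := fun a b => Relation.TransGen E b a)
      (fun _ _ _ hab hbc => hbc.trans hab) hacyc (.single hvw)⟩

/-- If a directed graph `G` with finitely many vertices has no cycles, then the geometric
realization of the nerve of the poset `C(G)` of proper labellings of `G` is contractible. -/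
theorem contractible_nerve_properLabellings
    (V : Type) [Fintype V] (E : V → V → Prop)
    (hacyc : ∀ v, ¬ Relation.TransGen E v v) :
    ContractibleSpace (SSet.toTop.obj (nerve (ProperLabelling V E))) := by
  obtain ⟨r, hr⟩ := exists_rank_lt_of_acyclic hacyc
  exact ProperLabelling.contractibleSpace_toTop_nerve_of_rank hr
end

section
/- Let G be a directed graph with vertex set V and let v be a vertex with no incoming edges (there is no u with (u,v) ∈ E). Then restriction of labellings along the inclusion V ∖ {v} ↪ V is an order isomorphism from the subposet of C(G) consisting of proper labellings ℓ with ℓ(v) = A onto the poset C(G ∖ {v}) of proper labellings of the full subgraph of G on V ∖ {v}. -/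
open CategoryTheory

namespace ProperLabelling

variable {V : Type} {E : V → V → Prop}

def restrict (p : V → Prop) (ℓ : ProperLabelling V E) :
    ProperLabelling { w // p w } (fun a b => E a.1 b.1) :=
  ⟨fun w => ℓ.1 w.1, fun a b hab => ℓ.2 a.1 b.1 hab⟩

theorem restrict_mono (p : V → Prop) : Monotone (restrict (E := E) p) :=
  fun _ _ h w => h w.1

open Classical in
/-- Labelling the source `v` by `A` keeps the labelling proper: every edge at `v` leaves `v`,
and an edge whose tail is labelled `A` imposes nothing. -/
noncomputable def extendSource {v : V} (hv : ∀ u, ¬ E u v)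
    (ℓ : ProperLabelling { w // w ≠ v } (fun a b => E a.1 b.1)) : ProperLabelling V E :=
  ⟨fun w => if h : w = v then Label.A else ℓ.1 ⟨w, h⟩, by
    intro a b hab
    by_cases ha : a = v
    · simp [ha]
    · have hb : b ≠ v := by rintro rfl; exact hv a hab
      simpa [ha, hb] using ℓ.2 ⟨a, ha⟩ ⟨b, hb⟩ hab⟩

variable {v : V} (hv : ∀ u, ¬ E u v)

theorem extendSource_apply_self (ℓ : ProperLabelling { w // w ≠ v } (fun a b => E a.1 b.1)) :
    (extendSource hv ℓ).1 v = Label.A := by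
  simp [extendSource]

theorem extendSource_apply_of_ne (ℓ : ProperLabelling { w // w ≠ v } (fun a b => E a.1 b.1))
    {w : V} (hw : w ≠ v) : (extendSource hv ℓ).1 w = ℓ.1 ⟨w, hw⟩ := by
  simp [extendSource, hw]

theorem restrict_extendSource (ℓ : ProperLabelling { w // w ≠ v } (fun a b => E a.1 b.1)) :
    restrict (· ≠ v) (extendSource hv ℓ) = ℓ :=
  Subtype.ext <| funext fun w => extendSource_apply_of_ne hv ℓ w.2

theorem extendSource_restrict {ℓ : ProperLabelling V E} (hℓ : ℓ.1 v = Label.A) :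
    extendSource hv (restrict (· ≠ v) ℓ) = ℓ := by
  refine Subtype.ext <| funext fun w => ?_
  by_cases hw : w = v
  · subst hw; rw [extendSource_apply_self hv, hℓ]
  · exact extendSource_apply_of_ne hv _ hw

theorem extendSource_mono : Monotone (extendSource hv) := by
  intro ℓ ℓ' h w
  by_cases hw : w = v
  · subst hw; left; rw [extendSource_apply_self hv, extendSource_apply_self hv]
  · rw [extendSource_apply_of_ne hv _ hw, extendSource_apply_of_ne hv _ hw]
    exact h ⟨w, hw⟩

noncomputable def restrictSourceOrderIso :
    { ℓ : ProperLabelling V E // ℓ.1 v = Label.A } ≃o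
      ProperLabelling { w // w ≠ v } (fun a b => E a.1 b.1) :=
  Equiv.toOrderIso
    { toFun := fun ℓ => restrict (· ≠ v) ℓ.1
      invFun := fun ℓ => ⟨extendSource hv ℓ, extendSource_apply_self hv ℓ⟩
      left_inv := fun ℓ => Subtype.ext (extendSource_restrict hv ℓ.2)
      right_inv := restrict_extendSource hv }
    (fun _ _ h => restrict_mono _ h)
    (fun _ _ h => extendSource_mono hv h)

end ProperLabelling

/-- Let `v` be a vertex of `G` with no incoming edges. Then restriction of labellings along
the inclusion `V ∖ {v} ↪ V` is an order isomorphism from the subposet of `C(G)` of proper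
labellings assigning `A` to `v` onto the poset `C(G ∖ {v})` of proper labellings of the
full subgraph of `G` on `V ∖ {v}`. -/
theorem restriction_orderIso_of_no_incoming_edges
    (V : Type) (E : V → V → Prop) (v : V) (hv : ∀ u, ¬ E u v) :
    ∃ e : { ℓ : ProperLabelling V E // ℓ.1 v = Label.A } ≃o
        ProperLabelling { w : V // w ≠ v } (fun a b => E a.1 b.1),
      ∀ (ℓ : { ℓ : ProperLabelling V E // ℓ.1 v = Label.A }) (w : { w : V // w ≠ v }),
        (e ℓ).1 w = ℓ.1.1 w.1 :=
  ⟨ProperLabelling.restrictSourceOrderIso hv, fun _ _ => rfl⟩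
end

section
/- Let G be a directed graph with vertex set V and let v be a vertex such that there is no nonempty directed path from v to itself. Let U be the set of vertices strictly above v (those w with a nonempty directed path from v to w), and let G_v be the full subgraph of G on V ∖ U. Then the map sending a proper labelling of G_v to its extension assigning B to every vertex of U is an order isomorphism from the poset C(G_v) onto the subposet of C(G) consisting of proper labellings that assign B to every vertex of U. -/
/-! The set `U` of vertices strictly above `v` is closed upwards along edges. So an edge
ending in `U` is satisfied by the label `B` at its head, and an edge starting outside `U` and
ending outside `U` is an edge of the full subgraph on the complement. Hence extending a proper
labelling of the complement by `B` keeps it proper, restriction inverts it, and neither changes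
a label outside `U`, while on `U` both sides carry `B`; this makes the bijection
order-preserving in both directions. -/

open CategoryTheory

lemma IsProper.subtype_val {V : Type} {E : V → V → Prop} {ℓ : V → Label} (hℓ : IsProper E ℓ)
    (S : V → Prop) : IsProper (fun a b : { w // S w } => E a.1 b.1) (fun w => ℓ w.1) :=
  fun a b hab => hℓ a.1 b.1 hab

namespace ProperLabelling

variable {V : Type} {E : V → V → Prop}

lemma le_iff {ℓ ℓ' : ProperLabelling V E} :
    ℓ ≤ ℓ' ↔ ∀ w, ℓ.1 w = ℓ'.1 w ∨ (ℓ.1 w ≠ Label.C ∧ ℓ'.1 w = Label.C) :=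
  Iff.rfl

variable (U : V → Prop) [DecidablePred U]

def extendByB (ℓ : { w // ¬ U w } → Label) (w : V) : Label :=
  if h : U w then Label.B else ℓ ⟨w, h⟩

lemma extendByB_of_mem {ℓ : { w // ¬ U w } → Label} {w : V} (hw : U w) :
    extendByB U ℓ w = Label.B :=
  dif_pos hw

lemma extendByB_of_not_mem {ℓ : { w // ¬ U w } → Label} (w : { w // ¬ U w }) :
    extendByB U ℓ w.1 = ℓ w :=
  dif_neg w.2

lemma isProper_extendByB (hU : ∀ a b, E a b → U a → U b) {ℓ : { w // ¬ U w } → Label}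
    (hℓ : IsProper (fun a b : { w // ¬ U w } => E a.1 b.1) ℓ) :
    IsProper E (extendByB U ℓ) := by
  intro a b hab
  by_cases hb : U b
  · exact Or.inr (extendByB_of_mem U hb)
  have ha : ¬ U a := fun ha => hb (hU a b hab ha)
  simpa only [extendByB_of_not_mem U ⟨a, ha⟩, extendByB_of_not_mem U ⟨b, hb⟩]
    using hℓ ⟨a, ha⟩ ⟨b, hb⟩ hab

def extendByBOrderIso (hU : ∀ a b, E a b → U a → U b) :
    ProperLabelling { w // ¬ U w } (fun a b => E a.1 b.1) ≃o
      { ℓ : ProperLabelling V E // ∀ w, U w → ℓ.1 w = Label.B } where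
  toFun ℓ := ⟨⟨extendByB U ℓ.1, isProper_extendByB U hU ℓ.2⟩, fun _ => extendByB_of_mem U⟩
  invFun ℓ := ⟨fun w => ℓ.1.1 w.1, ℓ.1.2.subtype_val _⟩
  left_inv ℓ := Subtype.ext <| funext <| extendByB_of_not_mem U
  right_inv ℓ := by
    refine Subtype.ext <| Subtype.ext <| funext fun w => ?_
    by_cases hw : U w
    · exact (extendByB_of_mem U hw).trans (ℓ.2 w hw).symm
    · exact extendByB_of_not_mem U ⟨w, hw⟩
  map_rel_iff' {ℓ ℓ'} := by
    change (∀ w, extendByB U ℓ.1 w = extendByB U ℓ'.1 w ∨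
      (extendByB U ℓ.1 w ≠ Label.C ∧ extendByB U ℓ'.1 w = Label.C)) ↔ ℓ ≤ ℓ'
    rw [le_iff]
    constructor
    · intro h w
      simpa only [extendByB_of_not_mem] using h w.1
    · intro h w
      by_cases hw : U w
      · exact Or.inl (by rw [extendByB_of_mem U hw, extendByB_of_mem U hw])
      · simpa only [extendByB_of_not_mem U ⟨w, hw⟩] using h ⟨w, hw⟩

lemma extendByBOrderIso_apply_of_not_mem (hU : ∀ a b, E a b → U a → U b)
    (ℓ : ProperLabelling { w // ¬ U w } (fun a b => E a.1 b.1)) (w : { w // ¬ U w }) :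
    (extendByBOrderIso U hU ℓ).1.1 w.1 = ℓ.1 w :=
  extendByB_of_not_mem U w

end ProperLabelling

theorem extension_orderIso_of_acyclic_at_vertex_general
    (V : Type) (E : V → V → Prop) (v : V) :
    ∃ e : ProperLabelling { w : V // ¬ Relation.TransGen E v w } (fun a b => E a.1 b.1) ≃o
        { ℓ : ProperLabelling V E // ∀ w, Relation.TransGen E v w → ℓ.1 w = Label.B },
      ∀ (ℓ : ProperLabelling { w : V // ¬ Relation.TransGen E v w } (fun a b => E a.1 b.1))
        (w : { w : V // ¬ Relation.TransGen E v w }),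
        (e ℓ).1.1 w.1 = ℓ.1 w := by
  classical
  have hU : ∀ a b, E a b → Relation.TransGen E v a → Relation.TransGen E v b :=
    fun _ _ hab ha => ha.tail hab
  exact ⟨ProperLabelling.extendByBOrderIso _ hU,
    ProperLabelling.extendByBOrderIso_apply_of_not_mem _ hU⟩

/-- Let `v` be a vertex of `G` with no nonempty directed path from `v` to itself, and let
`U` be the set of vertices strictly above `v` (reachable from `v` by a nonempty directed
path).  The map sending a proper labelling of the full subgraph `G_v` on `V ∖ U` to its
extension assigning `B` to every vertex of `U` is an order isomorphism from `C(G_v)` onto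
the subposet of `C(G)` of proper labellings assigning `B` to every vertex of `U`.
The isomorphism is characterised by the fact that it preserves the labels of the vertices
not in `U` (on `U` the labels are forced to be `B`). -/
theorem extension_orderIso_of_acyclic_at_vertex
    (V : Type) (E : V → V → Prop) (v : V) (hv : ¬ Relation.TransGen E v v) :
    ∃ e : ProperLabelling { w : V // ¬ Relation.TransGen E v w } (fun a b => E a.1 b.1) ≃o
        { ℓ : ProperLabelling V E // ∀ w, Relation.TransGen E v w → ℓ.1 w = Label.B },
      ∀ (ℓ : ProperLabelling { w : V // ¬ Relation.TransGen E v w } (fun a b => E a.1 b.1))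
        (w : { w : V // ¬ Relation.TransGen E v w }),
        (e ℓ).1.1 w.1 = ℓ.1 w :=
  extension_orderIso_of_acyclic_at_vertex_general V E v
end

section
/- Let G be a directed graph with vertex set V and let v be a vertex with no incoming edges and with no nonempty directed path from v to itself. Let U be the set of vertices strictly above v. Then the map sending a proper labelling of the full subgraph of G on V ∖ ({v} ∪ U) to its extension assigning A to v and B to every vertex of U is an order isomorphism from C(G_v ∖ {v}) onto the subposet of C(G) consisting of proper labellings ℓ with ℓ(v) = A and ℓ(w) = B for all w ∈ U. -/
open CategoryTheory

noncomputable def extLabel {V : Type} (E : V → V → Prop) (v : V)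
    (ℓ : { w : V // w ≠ v ∧ ¬ Relation.TransGen E v w } → Label) (w : V) : Label :=
  open Classical in
  if h : w = v then Label.A
  else if h' : Relation.TransGen E v w then Label.B
  else ℓ ⟨w, h, h'⟩

/-- Let `v` be a vertex of `G` with no incoming edges and no nonempty directed path from
`v` to itself, and let `U` be the set of vertices strictly above `v`.  The map sending a
proper labelling of the full subgraph of `G` on `V ∖ ({v} ∪ U)` to its extension assigning
`A` to `v` and `B` to every vertex of `U` is an order isomorphism from `C(G_v ∖ {v})` onto
the subposet of `C(G)` of proper labellings `ℓ` with `ℓ v = A` and `ℓ w = B` for all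
`w ∈ U`.  The isomorphism is characterised by the fact that it preserves the labels of the
vertices not in `{v} ∪ U` (on `{v} ∪ U` the labels are forced). -/
theorem extension_orderIso_of_root_vertex
    (V : Type) (E : V → V → Prop) (v : V)
    (hv : ∀ u, ¬ E u v) (hv' : ¬ Relation.TransGen E v v) :
    ∃ e : ProperLabelling { w : V // w ≠ v ∧ ¬ Relation.TransGen E v w }
            (fun a b => E a.1 b.1) ≃o
        { ℓ : ProperLabelling V E //
            ℓ.1 v = Label.A ∧ ∀ w, Relation.TransGen E v w → ℓ.1 w = Label.B },
      ∀ (ℓ : ProperLabelling { w : V // w ≠ v ∧ ¬ Relation.TransGen E v w }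
            (fun a b => E a.1 b.1))
        (w : { w : V // w ≠ v ∧ ¬ Relation.TransGen E v w }),
        (e ℓ).1.1 w.1 = ℓ.1 w := by
  classical
  have hextA : ∀ ℓ, extLabel E v ℓ v = Label.A := fun ℓ => dif_pos rfl
  have hextB : ∀ ℓ w, Relation.TransGen E v w → extLabel E v ℓ w = Label.B := by
    intro ℓ w hw
    have hwv : w ≠ v := fun h => hv' (h ▸ hw)
    show dite _ _ _ = _
    rw [dif_neg hwv, dif_pos hw]
  have hextO : ∀ ℓ (w : { w : V // w ≠ v ∧ ¬ Relation.TransGen E v w }),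
      extLabel E v ℓ w.1 = ℓ w := by
    intro ℓ w
    show dite _ _ _ = _
    rw [dif_neg w.2.1, dif_neg w.2.2]
  have hproper : ∀ ℓ : ProperLabelling { w : V // w ≠ v ∧ ¬ Relation.TransGen E v w }
      (fun a b => E a.1 b.1), IsProper E (extLabel E v ℓ.1) := by
    intro ℓ a b hab
    by_cases ha : a = v
    · exact Or.inl (ha ▸ hextA ℓ.1)
    by_cases ha' : Relation.TransGen E v a
    · exact Or.inr (hextB ℓ.1 b (ha'.tail hab))
    have hb : b ≠ v := fun h => hv a (h ▸ hab)
    by_cases hb' : Relation.TransGen E v b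
    · exact Or.inr (hextB ℓ.1 b hb')
    · rw [hextO ℓ.1 ⟨a, ha, ha'⟩, hextO ℓ.1 ⟨b, hb, hb'⟩]
      exact ℓ.2 ⟨a, ha, ha'⟩ ⟨b, hb, hb'⟩ hab
  refine ⟨{
    toFun := fun ℓ => ⟨⟨extLabel E v ℓ.1, hproper ℓ⟩, hextA ℓ.1, fun w hw => hextB ℓ.1 w hw⟩
    invFun := fun ℓ => ⟨fun w => ℓ.1.1 w.1, fun a b hab => ℓ.1.2 a.1 b.1 hab⟩
    left_inv := ?_
    right_inv := ?_
    map_rel_iff' := ?_ }, fun ℓ w => hextO ℓ.1 w⟩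
  · intro ℓ
    exact Subtype.ext (funext fun w => hextO ℓ.1 w)
  · intro ℓ
    apply Subtype.ext
    apply Subtype.ext
    funext w
    show extLabel E v (fun u => ℓ.1.1 u.1) w = ℓ.1.1 w
    by_cases h : w = v
    · rw [h, hextA, ℓ.2.1]
    by_cases h' : Relation.TransGen E v w
    · rw [hextB _ _ h', ℓ.2.2 w h']
    · exact hextO _ ⟨w, h, h'⟩
  · intro ℓ ℓ'
    constructor
    · intro h w
      have h2 : extLabel E v ℓ.1 w.1 = extLabel E v ℓ'.1 w.1 ∨
          (extLabel E v ℓ.1 w.1 ≠ Label.C ∧ extLabel E v ℓ'.1 w.1 = Label.C) := h w.1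
      rwa [hextO ℓ.1 w, hextO ℓ'.1 w] at h2
    · intro h
      show ∀ w : V, extLabel E v ℓ.1 w = extLabel E v ℓ'.1 w ∨
          (extLabel E v ℓ.1 w ≠ Label.C ∧ extLabel E v ℓ'.1 w = Label.C)
      intro w
      by_cases hw : w = v
      · exact Or.inl (by rw [hw, hextA, hextA])
      by_cases hw' : Relation.TransGen E v w
      · exact Or.inl (by rw [hextB _ _ hw', hextB _ _ hw'])
      · have h2 := h ⟨w, hw, hw'⟩
        rw [hextO ℓ.1 ⟨w, hw, hw'⟩, hextO ℓ'.1 ⟨w, hw, hw'⟩]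
        exact h2
end
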